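/- Let G be a digraph, s, t vertices with d := dist_G(s,t) < ∞, and let P be a simple s-to-t path with length(P) > d. Let p be the smallest natural number such that at least two distinct vertices of P lie in the layer L_p = {v : dist_G(s,v) = p}, let x and y be the first and second vertices of P in L_p, and let Q be any shortest s-to-y path in G. Then the concatenation Q ∘ P[y→t] is a simple s-to-t path in G of length exactly length(P) − length(P[x→y]). -/

import Mathlib

variable {V : Type*}

/-- `w` is a directed walk from `u` to `v` in the digraph with arc relation `A`:
a nonempty list of vertices whose consecutive members are joined by arcs,
starting at `u` and ending at `v`. -/
def IsDiWalk (A : V → V → Prop) (u v : V) (w : List V) : Prop :=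
  w.Chain' A ∧ w.head? = some u ∧ w.getLast? = some v

/-- The length (number of arcs) of a walk represented as its list of vertices. -/
def walkLength (w : List V) : ℕ :=
  w.length - 1

/-- `w` is a simple directed path from `u` to `v`. -/
def IsDiPath (A : V → V → Prop) (u v : V) (w : List V) : Prop :=
  IsDiWalk A u v w ∧ w.Nodup

/-- Directed distance from `u` to `v`: the minimum length of a directed
`u`-to-`v` walk, or `⊤` if `v` is unreachable from `u`. -/
noncomputable def ddist (A : V → V → Prop) (u v : V) : ℕ∞ :=
  ⨅ (w : List V) (_ : IsDiWalk A u v w), (walkLength w : ℕ∞)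

/-- The internal (non-endpoint) vertices of a path represented as a list. -/
def internalVerts (w : List V) : List V :=
  w.tail.dropLast

/-- Two paths are internally vertex-disjoint if no internal vertex of either
lies on the other. -/
def InternallyDisjoint (w₁ w₂ : List V) : Prop :=
  (∀ a ∈ internalVerts w₁, a ∉ w₂) ∧ (∀ a ∈ internalVerts w₂, a ∉ w₁)

/-- All vertices of `w` lie in the induced subgraph `G_{≥p}` (with respect to
source `s`), i.e. have distance at least `p` from `s`. A path satisfying
`IsDiPath A x y w` together with `InGeq A s p w` is exactly a path of the
induced subgraph of `G` on `{v : dist_G(s,v) ≥ p}`. -/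
def InGeq (A : V → V → Prop) (s : V) (p : ℕ) (w : List V) : Prop :=
  ∀ a ∈ w, (p : ℕ∞) ≤ ddist A s a

/-!
Write `P = v₀ v₁ ⋯`. Since `v₀ ⋯ vᵢ` is a walk, `dist(s, vᵢ) ≤ i`; if `dist(s, vᵢ) = q < i ≤ p`,
then `v_q` (at distance `q` by induction) and `vᵢ` would be two vertices of `P` in the layer
`L_q`, against the minimality of `p`. Hence `dist(s, vᵢ) = i` for `i ≤ p`, so `x = v_p`, and by
the same argument every later vertex of `P` lies at distance at least `p`. Every vertex of the
shortest path `Q` other than `y` lies at distance less than `dist(s, y) = p`, so `Q` meets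
`P[y→t]` only in `y`, and `Q` is exactly as long as `P[s→x]`.
-/

section Walks

variable {A : V → V → Prop} {s u v z : V} {w w₁ w₂ : List V}

lemma IsDiWalk.ne_nil (h : IsDiWalk A u v w) : w ≠ [] := by
  rintro rfl
  simp [IsDiWalk] at h

lemma ddist_le_walkLength (h : IsDiWalk A u v w) : ddist A u v ≤ walkLength w :=
  iInf₂_le w h

lemma walkLength_append_tail (h₁ : w₁ ≠ []) (h₂ : w₂ ≠ []) :
    walkLength (w₁ ++ w₂.tail) = walkLength w₁ + walkLength w₂ := by
  have := List.length_pos_iff.mpr h₁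
  have := List.length_pos_iff.mpr h₂
  simp only [walkLength, List.length_append, List.length_tail]
  omega

lemma IsDiWalk.append (h₁ : IsDiWalk A u v w₁) (h₂ : IsDiWalk A v z w₂) :
    IsDiWalk A u z (w₁ ++ w₂.tail) := by
  obtain ⟨v', t, rfl⟩ := List.exists_cons_of_ne_nil h₂.ne_nil
  obtain ⟨c₁, hh₁, hl₁⟩ := h₁
  obtain ⟨c₂, hh₂, hl₂⟩ := h₂
  obtain rfl : v' = v := by simpa using hh₂
  refine ⟨List.isChain_append.mpr ⟨c₁, c₂.tail, ?_⟩, by simp [hh₁], ?_⟩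
  · simpa [hl₁] using (List.isChain_cons.mp c₂).1
  · rw [List.getLast?_cons] at hl₂
    cases ht : t.getLast? <;> simp_all

lemma IsDiWalk.take (h : IsDiWalk A u v w) {i : ℕ} (hi : i < w.length) :
    IsDiWalk A u w[i] (w.take (i + 1)) :=
  ⟨h.1.take _, by simp [List.head?_take, h.2.1], by simp [List.getLast?_take, hi]⟩

lemma IsDiWalk.drop (h : IsDiWalk A u v w) {i : ℕ} (hi : i < w.length) :
    IsDiWalk A w[i] v (w.drop i) :=
  ⟨h.1.drop _, by simp [hi], by simp [List.getLast?_drop, hi.not_ge, h.2.2]⟩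

lemma exists_isDiWalk_walkLength_eq_ddist (h : ∃ w, IsDiWalk A u v w) :
    ∃ w, IsDiWalk A u v w ∧ walkLength w = ddist A u v := by
  have : Nonempty {w // IsDiWalk A u v w} := let ⟨w, hw⟩ := h; ⟨⟨w, hw⟩⟩
  obtain ⟨⟨w, hw⟩, hmin⟩ := ENat.exists_eq_iInf fun w : {w // IsDiWalk A u v w} ↦
    (walkLength w.1 : ℕ∞)
  exact ⟨w, hw, by rw [hmin, ddist, iInf_subtype']⟩

lemma ddist_le_add_walkLength (h : IsDiWalk A u v w) :
    ddist A s v ≤ ddist A s u + walkLength w := by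
  by_cases hsu : ∃ w₀, IsDiWalk A s u w₀
  · obtain ⟨w₀, hw₀, hlen⟩ := exists_isDiWalk_walkLength_eq_ddist hsu
    calc ddist A s v ≤ walkLength (w₀ ++ w.tail) := ddist_le_walkLength (hw₀.append h)
      _ = ddist A s u + walkLength w := by
        rw [walkLength_append_tail hw₀.ne_nil h.ne_nil, ← hlen]; push_cast; rfl
  · simp [ddist, not_exists.mp hsu]

lemma IsDiWalk.ddist_getElem_le (h : IsDiWalk A s v w) {i : ℕ} (hi : i < w.length) :
    ddist A s w[i] ≤ i := by
  simpa [walkLength, Nat.min_def, hi] using ddist_le_walkLength (h.take hi)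

end Walks

def HasTwoInLayer (A : V → V → Prop) (s : V) (w : List V) (q : ℕ) : Prop :=
  ∃ u ∈ w, ∃ v ∈ w, u ≠ v ∧ ddist A s u = q ∧ ddist A s v = q

section Layers

variable {A : V → V → Prop} {s v x y a : V} {P Q : List V} {p : ℕ}

lemma IsDiWalk.ddist_getElem_eq (hP : IsDiWalk A s v P) (hnd : P.Nodup)
    (hpmin : ∀ q < p, ¬ HasTwoInLayer A s P q) {i : ℕ} (hi : i < P.length) (hip : i ≤ p) :
    ddist A s P[i] = i := by
  induction i using Nat.strong_induction_on with
  | _ i ih =>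
    obtain ⟨q, hq, hqi⟩ := ENat.le_natCast_iff.mp (hP.ddist_getElem_le hi)
    rcases hqi.eq_or_lt with rfl | hlt
    · exact hq
    · have hne : P[q] ≠ P[i] := fun h ↦ hlt.ne (hnd.getElem_inj_iff.mp h)
      exact absurd ⟨P[q], P.getElem_mem _, P[i], P.getElem_mem _, hne,
        ih q hlt (by omega) (by omega), hq⟩ (hpmin q (by omega))

lemma IsDiWalk.le_ddist_getElem (hP : IsDiWalk A s v P) (hnd : P.Nodup)
    (hpmin : ∀ q < p, ¬ HasTwoInLayer A s P q) {j : ℕ} (hj : j < P.length) (hpj : p ≤ j) :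
    p ≤ ddist A s P[j] := by
  by_contra! hlt
  obtain ⟨q, hq, -⟩ := ENat.le_natCast_iff.mp hlt.le
  have hqp : q < p := by rw [hq] at hlt; exact_mod_cast hlt
  have hne : P[q] ≠ P[j] := fun h ↦ by have := hnd.getElem_inj_iff.mp h; omega
  exact hpmin q hqp ⟨P[q], P.getElem_mem _, P[j], P.getElem_mem _, hne,
    hP.ddist_getElem_eq hnd hpmin (by omega) hqp.le, hq⟩

lemma IsDiWalk.idxOf_eq_of_forall_take_ne [DecidableEq V] (hP : IsDiWalk A s v P)
    (hnd : P.Nodup) (hpmin : ∀ q < p, ¬ HasTwoInLayer A s P q) (hxP : x ∈ P)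
    (hxp : ddist A s x = p) (hxfirst : ∀ z ∈ P.take (P.idxOf x), ddist A s z ≠ p) :
    P.idxOf x = p := by
  have hi := List.idxOf_lt_length_iff.mpr hxP
  apply le_antisymm
  · by_contra! hpi
    refine hxfirst P[p] ?_ (hP.ddist_getElem_eq hnd hpmin (by omega) le_rfl)
    exact List.mem_iff_getElem.mpr ⟨p, by rw [List.length_take]; omega, List.getElem_take⟩
  · by_contra! hip
    have := hP.ddist_getElem_eq hnd hpmin hi hip.le
    rw [List.getElem_idxOf hi, hxp] at this
    exact hip.ne (by exact_mod_cast this.symm)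

lemma IsDiWalk.ddist_getElem_of_walkLength_eq (hQ : IsDiWalk A s y Q)
    (hshort : walkLength Q = ddist A s y) {i : ℕ} (hi : i < Q.length) :
    ddist A s Q[i] = i := by
  obtain ⟨q, hq, hqi⟩ := ENat.le_natCast_iff.mp (hQ.ddist_getElem_le hi)
  have htri := ddist_le_add_walkLength (s := s) (hQ.drop hi)
  rw [← hshort, hq] at htri
  have : walkLength Q ≤ q + walkLength (Q.drop i) := by exact_mod_cast htri
  simp only [walkLength, List.length_drop] at this
  rw [hq, show q = i by omega]

lemma IsDiWalk.eq_of_mem_of_walkLength_eq (hQ : IsDiWalk A s y Q)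
    (hshort : walkLength Q = ddist A s y) (ha : a ∈ Q) (hle : ddist A s y ≤ ddist A s a) :
    a = y := by
  obtain ⟨i, hi, rfl⟩ := List.mem_iff_getElem.mp ha
  rw [hQ.ddist_getElem_of_walkLength_eq hshort hi, ← hshort] at hle
  have hlast : i = Q.length - 1 := by
    have : walkLength Q ≤ i := by exact_mod_cast hle
    simp only [walkLength] at this
    omega
  have := hQ.2.2
  rw [List.getLast?_eq_getElem?, ← hlast, List.getElem?_eq_getElem hi] at this
  exact Option.some_injective _ this

end Layers

theorem stmt10_general [DecidableEq V] (A : V → V → Prop) (s t : V)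
    (P : List V) (hP : IsDiPath A s t P)
    (p : ℕ)
    (hpmin : ∀ q : ℕ, q < p →
      ¬ ∃ u ∈ P, ∃ v ∈ P, u ≠ v ∧ ddist A s u = (q : ℕ∞) ∧ ddist A s v = (q : ℕ∞))
    (x : V) (hxP : x ∈ P) (hxp : ddist A s x = (p : ℕ∞))
    (hxfirst : ∀ z ∈ P.take (P.idxOf x), ddist A s z ≠ (p : ℕ∞))
    (y : V) (hyP : y ∈ P) (hyp : ddist A s y = (p : ℕ∞))
    (hxy : P.idxOf x < P.idxOf y)
    (Q : List V) (hQ : IsDiPath A s y Q)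
    (hQshort : (walkLength Q : ℕ∞) = ddist A s y) :
    IsDiPath A s t (Q ++ (P.drop (P.idxOf y)).tail) ∧
      walkLength (Q ++ (P.drop (P.idxOf y)).tail) =
        walkLength P -
          walkLength ((P.drop (P.idxOf x)).take (P.idxOf y - P.idxOf x + 1)) := by
  obtain ⟨hPwalk, hPnd⟩ := hP
  obtain ⟨hQwalk, hQnd⟩ := hQ
  have hiy := List.idxOf_lt_length_iff.mpr hyP
  have hix : P.idxOf x = p := hPwalk.idxOf_eq_of_forall_take_ne hPnd hpmin hxP hxp hxfirst
  have hQlen : walkLength Q = p := by exact_mod_cast hQshort.trans hyp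
  have hPy : IsDiWalk A y t (P.drop (P.idxOf y)) := by
    simpa [List.getElem_idxOf hiy] using hPwalk.drop hiy
  have hdisj : ∀ a ∈ Q, a ∉ (P.drop (P.idxOf y)).tail := by
    intro a haQ haP
    rw [List.tail_drop, List.mem_iff_getElem] at haP
    obtain ⟨k, hk, rfl⟩ := haP
    rw [List.length_drop] at hk
    rw [List.getElem_drop] at haQ
    have hfar := hPwalk.le_ddist_getElem hPnd hpmin (j := P.idxOf y + 1 + k)
      (by omega) (by omega)
    have := (hQwalk.eq_of_mem_of_walkLength_eq hQshort haQ (hyp ▸ hfar)).trans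
      (List.getElem_idxOf hiy).symm
    rw [hPnd.getElem_inj_iff] at this
    omega
  have hPynd : (P.drop (P.idxOf y)).tail.Nodup :=
    ((List.tail_sublist _).trans (List.drop_sublist _ _)).nodup hPnd
  refine ⟨⟨hQwalk.append hPy, hQnd.append hPynd hdisj⟩, ?_⟩
  rw [walkLength_append_tail hQwalk.ne_nil hPy.ne_nil, hQlen]
  simp only [walkLength, List.length_drop, List.length_take]
  omega

/-- with `p`, `x`, `y` as in the layer analysis of a non-shortest
simple `s`-to-`t` path `P`, and `Q` any shortest `s`-to-`y` path, the
concatenation `Q ∘ P[y→t]` is a simple `s`-to-`t` path of length exactly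
`length(P) − length(P[x→y])`. -/
theorem stmt10 [DecidableEq V] (A : V → V → Prop) (s t : V)
    (d : ℕ) (hd : ddist A s t = (d : ℕ∞))
    (P : List V) (hP : IsDiPath A s t P)
    (hlong : (d : ℕ∞) < (walkLength P : ℕ∞))
    (p : ℕ)
    (hp : ∃ u ∈ P, ∃ v ∈ P, u ≠ v ∧ ddist A s u = (p : ℕ∞) ∧ ddist A s v = (p : ℕ∞))
    (hpmin : ∀ q : ℕ, q < p →
      ¬ ∃ u ∈ P, ∃ v ∈ P, u ≠ v ∧ ddist A s u = (q : ℕ∞) ∧ ddist A s v = (q : ℕ∞))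
    (x : V) (hxP : x ∈ P) (hxp : ddist A s x = (p : ℕ∞))
    (hxfirst : ∀ z ∈ P.take (P.idxOf x), ddist A s z ≠ (p : ℕ∞))
    (y : V) (hyP : y ∈ P) (hyp : ddist A s y = (p : ℕ∞))
    (hxy : P.idxOf x < P.idxOf y)
    (hysecond : ∀ z ∈ P.take (P.idxOf y), z ≠ x → ddist A s z ≠ (p : ℕ∞))
    (Q : List V) (hQ : IsDiPath A s y Q)
    (hQshort : (walkLength Q : ℕ∞) = ddist A s y) :
    IsDiPath A s t (Q ++ (P.drop (P.idxOf y)).tail) ∧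
      walkLength (Q ++ (P.drop (P.idxOf y)).tail) =
        walkLength P -
          walkLength ((P.drop (P.idxOf x)).take (P.idxOf y - P.idxOf x + 1)) :=
  stmt10_general A s t P hP p hpmin x hxP hxp hxfirst y hyP hyp hxy Q hQ hQshort
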